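/- Let 𝓓_m = lim_{x→∞} #{n ≤ x : H(n) = m}/x denote the natural density of integers whose super-factorization tree has height exactly m. Then for m ≥ 4, 𝓓_m = (1/2)·(1/(2↑↑m)) + θ/3^(2↑↑(m−1)) with |θ| ≤ 3. -/

import Mathlib

/-!
For every `k ≥ 1`, `H n ≤ k` iff `H (vₚ n) < k` for all `p`, and `H α < k` whenever `α < tet k`.
Any condition on the exponents `vₚ n` that holds for all exponents below some `a ≥ 2` defines a set
with a natural density: it agrees with its truncation to the primes `p ≤ P`, which is periodic,
outside a set of density `O(1 / P)`. Hence `{H n = k + 1} = {H n ≤ k + 1} \ {H n ≤ k}` has a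
density.

To locate it, note that `tet k` is the least number of height `k` and `2 * tet k` the next one.
So `H n = k + 1` agrees with `v₂ n = tet k` unless `p ^ tet k ∣ n` for some `p ≥ 3` (the case
`v₂ n ≥ 2 * tet k` is `p = 4`), a set of density at most `∑_{p ≥ 3} p ^ (-tet k) ≤ 3 / 3 ^ tet k`,
while `{v₂ n = tet k}` has density `1 / 2 ^ (tet k + 1)`.
-/

/-- Tetration base 2: `tet 0 = 1`, `tet (m+1) = 2 ^ tet m`. -/
def tet : ℕ → ℕ
  | 0 => 1
  | m + 1 => 2 ^ tet m

/-- Height of the super-factorization tree of `n`: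
`H 1 = 0` and `H n = 1 + max_{p^α ∥ n} H α` for `n > 1`. -/
def H : ℕ → ℕ
  | n =>
    if h : n ≤ 1 then 0
    else 1 + (n.primeFactors.attach.sup fun p => H (n.factorization p.1))
decreasing_by
  exact Nat.factorization_lt _ (by omega)

open Finset Filter Topology
open scoped Nat

lemma tet_succ (k : ℕ) : tet (k + 1) = 2 ^ tet k := rfl

lemma tet_strictMono : StrictMono tet :=
  strictMono_nat_of_lt_succ fun _ => Nat.lt_two_pow_self

lemma two_le_tet {k : ℕ} (hk : 1 ≤ k) : 2 ≤ tet k :=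
  tet_strictMono.monotone (a := 1) hk

lemma H_of_le_one {n : ℕ} (hn : n ≤ 1) : H n = 0 := by
  rw [H, dif_pos hn]

lemma H_of_two_le {n : ℕ} (hn : 2 ≤ n) :
    H n = 1 + n.primeFactors.sup fun p => H (n.factorization p) := by
  rw [H, dif_neg (by omega), Finset.sup_attach n.primeFactors fun p => H (n.factorization p)]

lemma H_zero : H 0 = 0 := H_of_le_one zero_le_one

lemma H_le_iff {k : ℕ} (hk : 1 ≤ k) (n : ℕ) : H n ≤ k ↔ ∀ p, H (n.factorization p) < k := by
  rcases le_or_gt n 1 with hn | hn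
  · have hfac : n.factorization = 0 := by
      interval_cases n <;> simp
    simp only [H_of_le_one hn, hfac, Finsupp.coe_zero, Pi.zero_apply, H_zero, zero_le, true_iff]
    intro
    omega
  · rw [H_of_two_le hn, add_comm, ← Nat.lt_iff_add_one_le,
      Finset.sup_lt_iff (by rw [Nat.bot_eq_zero]; omega)]
    refine ⟨fun h p => ?_, fun h p _ => h p⟩
    by_cases hp : p ∈ n.primeFactors
    · exact h p hp
    · rw [Finsupp.notMem_support_iff.mp hp, H_zero]
      omega

lemma H_prime_pow {p a : ℕ} (hp : p.Prime) (ha : 1 ≤ a) : H (p ^ a) = H a + 1 := by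
  rw [H_of_two_le (hp.two_le.trans (Nat.le_self_pow (by omega) p)),
    Nat.primeFactors_prime_pow (by omega) hp, hp.factorization_pow]
  simp [add_comm]

lemma H_tet (k : ℕ) : H (tet k) = k := by
  induction k with
  | zero => exact H_of_le_one le_rfl
  | succ k ih => rw [tet_succ, H_prime_pow Nat.prime_two (tet_strictMono.monotone k.zero_le), ih]

lemma exists_prime_le_H_factorization {k n : ℕ} (hk : 1 ≤ k) (h : k < H n) :
    ∃ p, p.Prime ∧ k ≤ H (n.factorization p) := by
  obtain ⟨p, hp⟩ : ∃ p, k ≤ H (n.factorization p) := by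
    simpa using (H_le_iff hk n).not.mp h.not_ge
  refine ⟨p, by_contra fun hnp => ?_, hp⟩
  rw [Nat.factorization_eq_zero_of_not_prime n hnp, H_zero] at hp
  omega

lemma tet_le_of_le_H {k α : ℕ} (hk : 1 ≤ k) (h : k ≤ H α) : tet k ≤ α := by
  induction k, hk using Nat.le_induction generalizing α with
  | base =>
    by_contra! hα
    rw [H_of_le_one (by change α < 2 at hα; omega)] at h
    omega
  | succ k hk ih =>
    obtain ⟨p, hp, hpk⟩ := exists_prime_le_H_factorization hk h
    have hα : α ≠ 0 := by rintro rfl; rw [H_zero] at h; omega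
    calc tet (k + 1) = 2 ^ tet k := rfl
      _ ≤ 2 ^ α.factorization p := Nat.pow_le_pow_right two_pos (ih hpk)
      _ ≤ p ^ α.factorization p := Nat.pow_le_pow_left hp.two_le _
      _ ≤ α := Nat.ordProj_le p hα

lemma H_lt_of_lt_tet {k α : ℕ} (hk : 1 ≤ k) (h : α < tet k) : H α < k :=
  lt_of_not_ge fun hH => h.not_ge (tet_le_of_le_H hk hH)

lemma two_mul_two_pow_le_three_pow {t : ℕ} (ht : 2 ≤ t) : 2 * 2 ^ t ≤ 3 ^ t := by
  induction t, ht using Nat.le_induction with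
  | base => norm_num
  | succ t _ ih => rw [pow_succ, pow_succ]; omega

lemma two_mul_tet_le_of_le_H {k α : ℕ} (hk : 2 ≤ k) (h : k ≤ H α) (hne : α ≠ tet k) :
    2 * tet k ≤ α := by
  obtain ⟨j, rfl⟩ : ∃ j, k = j + 1 := ⟨k - 1, by omega⟩
  obtain ⟨p, hp, hpj⟩ := exists_prime_le_H_factorization (by omega) h
  have ht : 2 ≤ tet j := two_le_tet (by omega)
  have hdvd : p ^ tet j ∣ α :=
    (pow_dvd_pow p (tet_le_of_le_H (by omega) hpj)).trans (Nat.ordProj_dvd α p)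
  have hα : α ≠ 0 := by rintro rfl; rw [H_zero] at h; omega
  rw [tet_succ]
  rcases hp.two_le.eq_or_lt with rfl | hp3
  · obtain ⟨c, rfl⟩ := hdvd
    have hc : c ≠ 1 := by rintro rfl; exact hne (mul_one _)
    have hc0 : c ≠ 0 := by rintro rfl; exact hα rfl
    rw [mul_comm]
    exact Nat.mul_le_mul_left _ (by omega)
  · calc 2 * 2 ^ tet j ≤ 3 ^ tet j := two_mul_two_pow_le_three_pow ht
      _ ≤ p ^ tet j := Nat.pow_le_pow_left hp3 _
      _ ≤ α := Nat.le_of_dvd (Nat.pos_of_ne_zero hα) hdvd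

lemma H_eq_succ_iff_or_exists_pow_dvd {k : ℕ} (hk : 2 ≤ k) (n : ℕ) :
    (H n = k + 1 ↔ n.factorization 2 = tet k) ∨ ∃ p, 3 ≤ p ∧ p ^ tet k ∣ n := by
  by_cases hbad : ∃ p, 3 ≤ p ∧ p ^ tet k ∣ n
  · exact Or.inr hbad
  left
  push Not at hbad
  have hother : ∀ p ≠ 2, H (n.factorization p) < k := by
    intro p hp2
    rcases lt_or_ge p 3 with hp | hp
    · have hnp : ¬ p.Prime := fun hpp => hp2 (by have := hpp.two_le; omega)
      rw [Nat.factorization_eq_zero_of_not_prime n hnp, H_zero]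
      omega
    · refine H_lt_of_lt_tet (by omega) (lt_of_not_ge fun hle => ?_)
      exact hbad p hp ((pow_dvd_pow p hle).trans (Nat.ordProj_dvd n p))
  -- `4 ^ tet k = 2 ^ (2 * tet k)`, so excluding `p = 4` also bounds the exponent of `2`
  have htwo : n.factorization 2 < 2 * tet k := lt_of_not_ge fun hle => by
    refine hbad 4 (by norm_num) ?_
    rw [show (4 : ℕ) ^ tet k = 2 ^ (2 * tet k) by rw [pow_mul]; norm_num]
    exact (pow_dvd_pow 2 hle).trans (Nat.ordProj_dvd n 2)
  rw [show H n = k + 1 ↔ H n ≤ k + 1 ∧ ¬ H n ≤ k by omega, H_le_iff (by omega),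
    H_le_iff (by omega)]
  constructor
  · rintro ⟨-, hnot⟩
    push Not at hnot
    obtain ⟨p, hp⟩ := hnot
    obtain rfl : p = 2 := by_contra fun h => (hother p h).not_ge hp
    by_contra hne
    exact htwo.not_ge (two_mul_tet_le_of_le_H hk hp hne)
  · intro hv
    refine ⟨fun p => ?_, fun hall => ?_⟩
    · rcases eq_or_ne p 2 with rfl | hp
      · rw [hv, H_tet]
        omega
      · have := hother p hp
        omega
    · have := hall 2
      rw [hv, H_tet] at this
      omega

open Classical in
noncomputable def countUpTo (s : ℕ → Prop) (x : ℕ) : ℕ := #{n ∈ Icc 1 x | s n}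

def HasDensity (s : ℕ → Prop) (d : ℝ) : Prop :=
  Tendsto (fun x : ℕ => (countUpTo s x : ℝ) / x) atTop (𝓝 d)

lemma countUpTo_eq (s : ℕ → Prop) [DecidablePred s] (x : ℕ) :
    countUpTo s x = #{n ∈ Icc 1 x | s n} := by
  unfold countUpTo
  congr

lemma countUpTo_le_self (s : ℕ → Prop) (x : ℕ) : countUpTo s x ≤ x := by
  classical
  simpa [countUpTo_eq] using card_filter_le (Icc 1 x) s

section Counting

variable {s t u : ℕ → Prop}

lemma countUpTo_congr (h : ∀ n, n ≠ 0 → (s n ↔ t n)) : countUpTo s = countUpTo t := by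
  classical
  ext x
  simp only [countUpTo_eq]
  exact congrArg card (filter_congr fun n hn => h n (by simp at hn; omega))

lemma countUpTo_le_add (h : ∀ n, s n → t n ∨ u n) (x : ℕ) :
    countUpTo s x ≤ countUpTo t x + countUpTo u x := by
  classical
  simp only [countUpTo_eq]
  refine (card_le_card fun n hn => ?_).trans (card_union_le _ _)
  simp only [mem_filter, mem_union] at hn ⊢
  exact (h n hn.2).imp (⟨hn.1, ·⟩) (⟨hn.1, ·⟩)

lemma abs_sub_countUpTo_le (h : ∀ n, (s n ↔ t n) ∨ u n) (x : ℕ) :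
    |(countUpTo s x : ℝ) - countUpTo t x| ≤ countUpTo u x := by
  have hst : (countUpTo s x : ℝ) ≤ countUpTo t x + countUpTo u x := by
    exact_mod_cast countUpTo_le_add (fun n hs => (h n).imp (·.mp hs) id) x
  have hts : (countUpTo t x : ℝ) ≤ countUpTo s x + countUpTo u x := by
    exact_mod_cast countUpTo_le_add (fun n ht => (h n).imp (·.mpr ht) id) x
  rw [abs_sub_le_iff]
  constructor <;> linarith

lemma countUpTo_and_not_add (h : ∀ n, t n → s n) (x : ℕ) :
    countUpTo (fun n => s n ∧ ¬ t n) x + countUpTo t x = countUpTo s x := by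
  classical
  simp only [countUpTo_eq]
  rw [← card_filter_add_card_filter_not (s := {n ∈ Icc 1 x | s n}) t, filter_filter,
    filter_filter, add_comm]
  exact congrArg (#· + _) (filter_congr fun n _ => ⟨fun ht => ⟨h n ht, ht⟩, And.right⟩)

lemma countUpTo_dvd (d x : ℕ) : countUpTo (d ∣ ·) x = x / d := by
  rw [countUpTo_eq, ← Nat.Ioc_filter_dvd_card_eq_div, ← Icc_add_one_left_eq_Ioc]
  rfl

lemma countUpTo_add_of_periodic {Q : ℕ} (hs : Function.Periodic s Q) (x : ℕ) :
    countUpTo s (x + Q) = countUpTo s x + countUpTo s Q := by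
  classical
  have key : ∀ x, countUpTo s (x + Q) = countUpTo s x + Q.count s := fun x => by
    simp only [countUpTo_eq, ← Ico_add_one_right_eq_Icc]
    rw [add_right_comm, ← Ico_union_Ico_eq_Ico (b := x + 1) (by omega) (by omega), filter_union,
      card_union_of_disjoint (disjoint_filter_filter (Ico_disjoint_Ico_consecutive _ _ _)),
      Nat.filter_Ico_card_eq_of_periodic _ _ _ hs]
  rw [key x, ← zero_add Q, key 0]
  simp [countUpTo_eq]

lemma countUpTo_le_mul_sum {x e : ℕ} (T : Finset ℕ)
    (h : ∀ n, 1 ≤ n → n ≤ x → s n → ∃ k ∈ T, k ^ e ∣ n) :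
    (countUpTo s x : ℝ) ≤ x * ∑ k ∈ T, 1 / (k : ℝ) ^ e := by
  classical
  have hcount : countUpTo s x ≤ ∑ k ∈ T, x / k ^ e := by
    rw [countUpTo_eq]
    calc #{n ∈ Icc 1 x | s n} ≤ #(T.biUnion fun k => {n ∈ Icc 1 x | k ^ e ∣ n}) := by
          refine card_le_card fun n hn => ?_
          simp only [mem_filter, mem_Icc] at hn
          obtain ⟨k, hk, hdvd⟩ := h n hn.1.1 hn.1.2 hn.2
          exact mem_biUnion.mpr ⟨k, hk, mem_filter.mpr ⟨mem_Icc.mpr hn.1, hdvd⟩⟩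
      _ ≤ ∑ k ∈ T, #{n ∈ Icc 1 x | k ^ e ∣ n} := card_biUnion_le
      _ = ∑ k ∈ T, x / k ^ e := sum_congr rfl fun k _ => by rw [← countUpTo_eq, countUpTo_dvd]
  calc (countUpTo s x : ℝ) ≤ ∑ k ∈ T, ((x / k ^ e : ℕ) : ℝ) := by exact_mod_cast hcount
    _ ≤ ∑ k ∈ T, (x : ℝ) / (k : ℝ) ^ e := sum_le_sum fun k _ => by
        exact_mod_cast Nat.cast_div_le (α := ℝ)
    _ = x * ∑ k ∈ T, 1 / (k : ℝ) ^ e := by rw [mul_sum]; simp only [mul_one_div]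

end Counting

lemma tendsto_div_of_abs_sub_mul_le {a : ℕ → ℝ} {ℓ C : ℝ} (h : ∀ x, |a x - ℓ * x| ≤ C) :
    Tendsto (fun x : ℕ => a x / x) atTop (𝓝 ℓ) := by
  rw [← tendsto_sub_nhds_zero_iff]
  refine squeeze_zero_norm' ?_
    ((tendsto_const_nhds (x := C)).div_atTop tendsto_natCast_atTop_atTop)
  filter_upwards [eventually_gt_atTop 0] with x hx
  have hx' : (0 : ℝ) < x := Nat.cast_pos.mpr hx
  rw [Real.norm_eq_abs, show a x / x - ℓ = (a x - ℓ * x) / x by field_simp, abs_div,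
    abs_of_pos hx']
  exact div_le_div_of_nonneg_right (h x) hx'.le

lemma exists_tendsto_of_forall_eventually_abs_sub_le {a : ℕ → ℝ}
    (h : ∀ ε > 0, ∃ L, ∀ᶠ x in atTop, |a x - L| ≤ ε) : ∃ d, Tendsto a atTop (𝓝 d) := by
  refine cauchySeq_tendsto_of_complete (Metric.cauchySeq_iff'.mpr fun ε hε => ?_)
  obtain ⟨L, hL⟩ := h (ε / 3) (by positivity)
  obtain ⟨N, hN⟩ := eventually_atTop.mp hL
  refine ⟨N, fun n hn => ?_⟩
  have h₁ := abs_le.mp (hN n hn)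
  have h₂ := abs_le.mp (hN N le_rfl)
  rw [Real.dist_eq, abs_sub_lt_iff]
  constructor <;> linarith

section Density

variable {s t u : ℕ → Prop}

lemma hasDensity_congr (h : ∀ n, n ≠ 0 → (s n ↔ t n)) {d : ℝ} :
    HasDensity s d ↔ HasDensity t d := by
  rw [HasDensity, HasDensity, countUpTo_congr h]

lemma hasDensity_of_periodic {Q : ℕ} (hs : Function.Periodic s Q) (hQ : 0 < Q) :
    HasDensity s (countUpTo s Q / Q) := by
  have hblock : ∀ r q, countUpTo s (r + Q * q) = countUpTo s r + q * countUpTo s Q := by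
    intro r q
    induction q with
    | zero => simp
    | succ q ih => rw [mul_add_one, ← add_assoc, countUpTo_add_of_periodic hs, ih]; ring
  refine tendsto_div_of_abs_sub_mul_le (C := Q) fun x => ?_
  obtain ⟨r, q, hr, rfl⟩ : ∃ r q, r < Q ∧ x = r + Q * q :=
    ⟨x % Q, x / Q, Nat.mod_lt x hQ, (Nat.mod_add_div x Q).symm⟩
  have hQ' : (0 : ℝ) < Q := Nat.cast_pos.mpr hQ
  have hr' : (r : ℝ) / Q ≤ 1 := (div_le_one hQ').mpr (by exact_mod_cast hr.le)
  have hcr : (countUpTo s r : ℝ) ≤ Q := by exact_mod_cast (countUpTo_le_self s r).trans hr.le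
  have hcQ : (countUpTo s Q : ℝ) ≤ Q := by exact_mod_cast countUpTo_le_self s Q
  rw [hblock]
  push_cast
  rw [show (countUpTo s r : ℝ) + q * countUpTo s Q - countUpTo s Q / Q * (r + Q * q)
      = countUpTo s r - countUpTo s Q * (r / Q) by field_simp; ring]
  refine abs_sub_le_of_nonneg_of_le (by positivity) hcr (by positivity) ?_
  calc (countUpTo s Q : ℝ) * (r / Q) ≤ Q * 1 := by gcongr
    _ = Q := mul_one _

lemma hasDensity_dvd {d : ℕ} (hd : 0 < d) : HasDensity (d ∣ ·) (1 / d) := by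
  have := hasDensity_of_periodic (s := (d ∣ ·)) (fun n => propext Nat.dvd_add_self_right) hd
  rwa [countUpTo_dvd, Nat.div_self hd, Nat.cast_one] at this

lemma HasDensity.and_not {d e : ℝ} (hs : HasDensity s d) (ht : HasDensity t e)
    (h : ∀ n, t n → s n) : HasDensity (fun n => s n ∧ ¬ t n) (d - e) := by
  refine (hs.sub ht).congr fun x => ?_
  rw [← countUpTo_and_not_add h x]
  push_cast
  ring

lemma hasDensity_factorization_eq {p : ℕ} (hp : p.Prime) (A : ℕ) :
    HasDensity (fun n => n.factorization p = A) (1 / p ^ A - 1 / p ^ (A + 1)) := by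
  have := (hasDensity_dvd (pow_pos hp.pos A)).and_not (hasDensity_dvd (pow_pos hp.pos (A + 1)))
    fun n => (pow_dvd_pow p A.le_succ).trans
  push_cast at this
  refine (hasDensity_congr fun n hn => ?_).mpr this
  rw [hp.pow_dvd_iff_le_factorization hn, hp.pow_dvd_iff_le_factorization hn]
  omega

lemma abs_countUpTo_div_sub_le (h : ∀ n, (s n ↔ t n) ∨ u n) {c : ℝ}
    (hu : ∀ x, (countUpTo u x : ℝ) ≤ c * x) {x : ℕ} (hx : 0 < x) :
    |(countUpTo s x : ℝ) / x - countUpTo t x / x| ≤ c := by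
  have hx' : (0 : ℝ) < x := Nat.cast_pos.mpr hx
  rw [← sub_div, abs_div, abs_of_pos hx', div_le_iff₀ hx']
  exact (abs_sub_countUpTo_le h x).trans (hu x)

lemma HasDensity.abs_sub_le {d e : ℝ} (hs : HasDensity s d) (ht : HasDensity t e)
    (h : ∀ n, (s n ↔ t n) ∨ u n) {c : ℝ} (hu : ∀ x, (countUpTo u x : ℝ) ≤ c * x) :
    |d - e| ≤ c := by
  refine le_of_tendsto (hs.sub ht).abs ?_
  filter_upwards [eventually_gt_atTop 0] with x hx
  exact abs_countUpTo_div_sub_le h hu hx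

lemma exists_hasDensity_of_approx
    (h : ∀ ε > 0, ∃ (t u : ℕ → Prop) (e : ℝ), HasDensity t e ∧ (∀ n, (s n ↔ t n) ∨ u n) ∧
      ∀ x, (countUpTo u x : ℝ) ≤ ε * x) :
    ∃ d, HasDensity s d := by
  refine exists_tendsto_of_forall_eventually_abs_sub_le fun ε hε => ?_
  obtain ⟨t, u, e, ht, hst, hu⟩ := h (ε / 2) (by positivity)
  refine ⟨e, ?_⟩
  filter_upwards [eventually_gt_atTop 0, Metric.tendsto_nhds.mp ht (ε / 2) (by positivity)]
    with x hx hxt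
  have h₁ := abs_le.mp (abs_countUpTo_div_sub_le hst hu hx)
  have h₂ := abs_lt.mp (Real.dist_eq _ e ▸ hxt)
  rw [abs_le]
  constructor <;> linarith

end Density

lemma sum_Ioc_one_div_pow_le {e : ℕ} (he : 2 ≤ e) (P N : ℕ) :
    ∑ k ∈ Ioc P N, 1 / (k : ℝ) ^ e ≤ 2 / (P + 1) ^ (e - 1) := by
  have hsq : ∑ k ∈ Ioc P N, ((k : ℝ) ^ 2)⁻¹ ≤ 2 / (P + 1) := by
    simpa [Ioo_add_one_right_eq_Ioc] using sum_Ioo_inv_sq_le (α := ℝ) P (N + 1)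
  have hterm : ∀ k ∈ Ioc P N,
      1 / (k : ℝ) ^ e ≤ 1 / ((P : ℝ) + 1) ^ (e - 2) * ((k : ℝ) ^ 2)⁻¹ := by
    intro k hk
    have hPk : (P : ℝ) + 1 ≤ k := by exact_mod_cast (mem_Ioc.mp hk).1
    calc 1 / (k : ℝ) ^ e = 1 / ((k : ℝ) ^ (e - 2) * (k : ℝ) ^ 2) := by
          rw [← pow_add, Nat.sub_add_cancel he]
      _ ≤ 1 / (((P : ℝ) + 1) ^ (e - 2) * (k : ℝ) ^ 2) := by
          have hk0 : (0 : ℝ) < k := by linarith [P.cast_nonneg (α := ℝ)]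
          exact one_div_le_one_div_of_le (mul_pos (by positivity) (pow_pos hk0 2)) (by gcongr)
      _ = 1 / ((P : ℝ) + 1) ^ (e - 2) * ((k : ℝ) ^ 2)⁻¹ := by field_simp
  calc ∑ k ∈ Ioc P N, 1 / (k : ℝ) ^ e
      ≤ ∑ k ∈ Ioc P N, 1 / ((P : ℝ) + 1) ^ (e - 2) * ((k : ℝ) ^ 2)⁻¹ := sum_le_sum hterm
    _ ≤ 1 / ((P : ℝ) + 1) ^ (e - 2) * (2 / (P + 1)) := by rw [← mul_sum]; gcongr
    _ = 2 / (P + 1) ^ (e - 1) := by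
        rw [show e - 1 = e - 2 + 1 by omega, pow_succ]
        field_simp

lemma factorization_add_of_pow_dvd {p a n Q : ℕ} (hp : p.Prime) (hQ : p ^ a ∣ Q)
    (hn : ¬ p ^ a ∣ n) : (n + Q).factorization p = n.factorization p := by
  have hiff : ∀ j ≤ a, p ^ j ∣ n + Q ↔ p ^ j ∣ n := fun j hj =>
    Nat.dvd_add_left ((pow_dvd_pow p hj).trans hQ)
  have hn0 : n ≠ 0 := by rintro rfl; exact hn (dvd_zero _)
  have hnQ : n + Q ≠ 0 := by omega
  have hlt : n.factorization p < a :=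
    lt_of_not_ge fun h => hn ((hp.pow_dvd_iff_le_factorization hn0).mpr h)
  refine le_antisymm (not_lt.mp fun h => ?_) ?_
  · have := (hiff _ hlt).mp ((hp.pow_dvd_iff_le_factorization hnQ).mpr h)
    exact (Nat.lt_irrefl _) ((hp.pow_dvd_iff_le_factorization hn0).mp this)
  · exact (hp.pow_dvd_iff_le_factorization hnQ).mp ((hiff _ hlt.le).mpr (Nat.ordProj_dvd n p))

/-- `∀ p, f (n.factorization p)` truncated to the primes `p ≤ P`; the extra condition `p ^ P ∤ n`
makes it periodic modulo `P ! ^ P`. -/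
def SmallPrimesCond (f : ℕ → Prop) (P n : ℕ) : Prop :=
  ∀ p ≤ P, p.Prime → ¬ p ^ P ∣ n ∧ f (n.factorization p)

lemma periodic_smallPrimesCond (f : ℕ → Prop) (P : ℕ) :
    Function.Periodic (SmallPrimesCond f P) (P ! ^ P) := by
  intro n
  refine propext (forall_congr' fun p => forall_congr' fun hpP => forall_congr' fun hp => ?_)
  have hdvd : p ^ P ∣ P ! ^ P := pow_dvd_pow_of_dvd (Nat.dvd_factorial hp.pos hpP) P
  rw [Nat.dvd_add_left hdvd]
  exact and_congr_right fun hn => by rw [factorization_add_of_pow_dvd hp hdvd hn]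

lemma forall_factorization_iff_smallPrimesCond_or {f : ℕ → Prop} {a : ℕ} (ha : 1 ≤ a)
    (hf : ∀ α < a, f α) (P n : ℕ) :
    ((∀ p, f (n.factorization p)) ↔ SmallPrimesCond f P n) ∨
      (∃ p, p.Prime ∧ p ≤ P ∧ p ^ P ∣ n) ∨ ∃ p, P < p ∧ p ^ a ∣ n := by
  by_cases hbad : (∃ p, p.Prime ∧ p ≤ P ∧ p ^ P ∣ n) ∨ ∃ p, P < p ∧ p ^ a ∣ n
  · exact Or.inr hbad
  push Not at hbad
  obtain ⟨hsmall, hlarge⟩ := hbad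
  refine Or.inl ⟨fun h p hpP hp => ⟨hsmall p hp hpP, h p⟩, fun h p => ?_⟩
  by_cases hp : p.Prime
  · rcases le_or_gt p P with hpP | hpP
    · exact (h p hpP hp).2
    · exact hf _ (lt_of_not_ge fun hle =>
        hlarge p hpP ((pow_dvd_pow p hle).trans (Nat.ordProj_dvd n p)))
  · rw [Nat.factorization_eq_zero_of_not_prime n hp]
    exact hf 0 ha

lemma countUpTo_exists_prime_le_or_gt_pow_dvd_le {a P : ℕ} (ha : 2 ≤ a) (hP : 2 ≤ P) (x : ℕ) :
    (countUpTo (fun n => (∃ p, p.Prime ∧ p ≤ P ∧ p ^ P ∣ n) ∨ ∃ p, P < p ∧ p ^ a ∣ n) x : ℝ)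
      ≤ 6 / P * x := by
  have hP' : (0 : ℝ) < P := by positivity
  have hsmall : (countUpTo (fun n => ∃ p, p.Prime ∧ p ≤ P ∧ p ^ P ∣ n) x : ℝ) ≤ 4 / P * x := by
    refine (countUpTo_le_mul_sum (Ioc 1 P) fun n _ _ ⟨p, hp, hpP, hdvd⟩ =>
      ⟨p, mem_Ioc.mpr ⟨hp.one_lt, hpP⟩, hdvd⟩).trans ?_
    rw [mul_comm]
    gcongr
    calc ∑ k ∈ Ioc 1 P, 1 / (k : ℝ) ^ P ≤ 2 / (1 + 1) ^ (P - 1) := by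
          exact_mod_cast sum_Ioc_one_div_pow_le hP 1 P
      _ = 4 / 2 ^ P := by
          rw [show P = P - 1 + 1 by omega, pow_succ, Nat.add_sub_cancel]
          field_simp
          ring
      _ ≤ 4 / P := by
          gcongr
          exact_mod_cast Nat.lt_two_pow_self.le
  have hlarge : (countUpTo (fun n => ∃ p, P < p ∧ p ^ a ∣ n) x : ℝ) ≤ 2 / P * x := by
    have hcover : ∀ n, 1 ≤ n → n ≤ x → (∃ p, P < p ∧ p ^ a ∣ n) → ∃ p ∈ Ioc P x, p ^ a ∣ n :=
      fun n hn hnx ⟨p, hpP, hdvd⟩ => ⟨p, mem_Ioc.mpr ⟨hpP,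
        (Nat.le_self_pow (by omega) p).trans ((Nat.le_of_dvd hn hdvd).trans hnx)⟩, hdvd⟩
    refine (countUpTo_le_mul_sum (Ioc P x) hcover).trans ?_
    rw [mul_comm]
    gcongr
    calc ∑ k ∈ Ioc P x, 1 / (k : ℝ) ^ a ≤ 2 / (P + 1) ^ (a - 1) := sum_Ioc_one_div_pow_le ha P x
      _ ≤ 2 / P := by
          gcongr
          calc (P : ℝ) ≤ P + 1 := by linarith
            _ ≤ (P + 1) ^ (a - 1) := le_self_pow₀ (by linarith) (by omega)
  calc (countUpTo _ x : ℝ) ≤ countUpTo (fun n => ∃ p, p.Prime ∧ p ≤ P ∧ p ^ P ∣ n) x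
        + countUpTo (fun n => ∃ p, P < p ∧ p ^ a ∣ n) x := by
        exact_mod_cast countUpTo_le_add (fun n => id) x
    _ ≤ 4 / P * x + 2 / P * x := add_le_add hsmall hlarge
    _ = 6 / P * x := by ring

theorem exists_hasDensity_forall_factorization {f : ℕ → Prop} {a : ℕ} (ha : 2 ≤ a)
    (hf : ∀ α < a, f α) : ∃ d, HasDensity (fun n => ∀ p, f (n.factorization p)) d := by
  refine exists_hasDensity_of_approx fun ε hε => ?_
  obtain ⟨N, hN⟩ := exists_nat_gt (6 / ε)
  set P := max N 2
  have hP : 6 / (P : ℝ) ≤ ε := by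
    have : (N : ℝ) ≤ P := by exact_mod_cast le_max_left N 2
    rw [div_le_iff₀ (Nat.cast_pos.mpr (by omega))]
    rw [div_lt_iff₀ hε] at hN
    nlinarith
  exact ⟨SmallPrimesCond f P, _, _,
    hasDensity_of_periodic (periodic_smallPrimesCond f P) (pow_pos P.factorial_pos P),
    forall_factorization_iff_smallPrimesCond_or (by omega) hf P,
    fun x => (countUpTo_exists_prime_le_or_gt_pow_dvd_le ha (le_max_right N 2) x).trans (by gcongr)⟩

lemma exists_hasDensity_H_le {k : ℕ} (hk : 1 ≤ k) : ∃ d, HasDensity (fun n => H n ≤ k) d := by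
  rw [show (fun n => H n ≤ k) = fun n => ∀ p, H (n.factorization p) < k from
    funext fun n => propext (H_le_iff hk n)]
  exact exists_hasDensity_forall_factorization (f := (H · < k)) (two_le_tet hk)
    fun _ => H_lt_of_lt_tet hk

lemma exists_hasDensity_H_eq {k : ℕ} (hk : 1 ≤ k) :
    ∃ d, HasDensity (fun n => H n = k + 1) d := by
  obtain ⟨d₁, h₁⟩ := exists_hasDensity_H_le (k := k + 1) (by omega)
  obtain ⟨d₀, h₀⟩ := exists_hasDensity_H_le hk
  refine ⟨d₁ - d₀, (hasDensity_congr fun n _ => ?_).mpr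
    (h₁.and_not h₀ fun _ => Nat.le_succ_of_le)⟩
  omega

lemma three_pow_le_four_pow_pred {A : ℕ} (hA : 5 ≤ A) : 3 ^ A ≤ 4 ^ (A - 1) := by
  induction A, hA using Nat.le_induction with
  | base => norm_num
  | succ A hA ih =>
    rw [pow_succ, show A + 1 - 1 = A - 1 + 1 by omega, pow_succ]
    omega

lemma countUpTo_exists_three_le_pow_dvd_le {A : ℕ} (hA : 5 ≤ A) (x : ℕ) :
    (countUpTo (fun n => ∃ p, 3 ≤ p ∧ p ^ A ∣ n) x : ℝ) ≤ 3 / 3 ^ A * x := by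
  have hcover : ∀ n, 1 ≤ n → n ≤ x → (∃ p, 3 ≤ p ∧ p ^ A ∣ n) →
      ∃ p ∈ insert 3 (Ioc 3 x), p ^ A ∣ n := fun n hn hnx ⟨p, hp, hdvd⟩ => by
    have hpx : p ≤ x := (Nat.le_self_pow (by omega) p).trans ((Nat.le_of_dvd hn hdvd).trans hnx)
    exact ⟨p, by simp only [mem_insert, mem_Ioc]; omega, hdvd⟩
  refine (countUpTo_le_mul_sum _ hcover).trans ?_
  rw [sum_insert (by simp), mul_comm]
  gcongr
  have h43 : (3 : ℝ) ^ A ≤ 4 ^ (A - 1) := by exact_mod_cast three_pow_le_four_pow_pred hA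
  calc 1 / ((3 : ℕ) : ℝ) ^ A + ∑ k ∈ Ioc 3 x, 1 / (k : ℝ) ^ A
      ≤ 1 / 3 ^ A + 2 / (3 + 1) ^ (A - 1) := by
        gcongr
        · norm_num
        · exact_mod_cast sum_Ioc_one_div_pow_le (by omega) 3 x
    _ ≤ 1 / 3 ^ A + 2 / 3 ^ A := by rw [show (3 : ℝ) + 1 = 4 by norm_num]; gcongr
    _ = 3 / 3 ^ A := by ring

theorem stmt13 (m : ℕ) (hm : 4 ≤ m) :
    ∃ θ : ℝ, |θ| ≤ 3 ∧
      Filter.Tendsto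
        (fun x : ℕ => (((Finset.Icc 1 x).filter fun n => H n = m).card : ℝ) / x)
        Filter.atTop
        (nhds (1 / 2 * (1 / tet m) + θ / 3 ^ tet (m - 1))) := by
  obtain ⟨k, rfl⟩ : ∃ k, m = k + 1 := ⟨m - 1, by omega⟩
  have hA : 5 ≤ tet k := le_trans (by decide) (tet_strictMono.monotone (a := 3) (by omega))
  obtain ⟨d, hd⟩ := exists_hasDensity_H_eq (k := k) (by omega)
  set e : ℝ := 1 / 2 ^ tet k - 1 / 2 ^ (tet k + 1) with he
  have hdist : |d - e| ≤ 3 / 3 ^ tet k := by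
    refine hd.abs_sub_le (hasDensity_factorization_eq Nat.prime_two (tet k))
      (H_eq_succ_iff_or_exists_pow_dvd (by omega)) fun x => ?_
    simpa using countUpTo_exists_three_le_pow_dvd_le hA x
  refine ⟨(d - e) * 3 ^ tet k, ?_, ?_⟩
  · rw [abs_mul, abs_of_pos (pow_pos three_pos _ : (0 : ℝ) < 3 ^ tet k)]
    calc |d - e| * 3 ^ tet k ≤ 3 / 3 ^ tet k * 3 ^ tet k := by gcongr
      _ = 3 := div_mul_cancel₀ _ (by positivity)
  · have hlim :
        1 / 2 * (1 / (tet (k + 1) : ℝ)) + (d - e) * 3 ^ tet k / 3 ^ tet (k + 1 - 1) = d := by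
      rw [he, tet_succ, Nat.add_sub_cancel]
      push_cast
      field_simp
      ring
    rw [hlim]
    simpa only [HasDensity, countUpTo_eq] using hd
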